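/- arXiv:2502.06689 — 5 statements merged into one kernel-verified Lean document; each statement's English description precedes it below -/
import Mathlib

section
/- Let G be a finite weighted graph with nonnegative symmetric weight matrix W_G, degree matrix D_G = diag(W_G 1), and Laplacian L_G = D_G - W_G. For a vertex subset V_S with degree submatrix T_S = D_G[V_S, V_S], boundary operator B = W_G[V_G∖V_S, V_S], boundary degree matrix T_S^δ = diag(B 1), define the Neumann Laplacian L_S^N = L_G[V_S,V_S] - Bᵀ (T_S^δ)⁻¹ B and R = I - T_S⁻¹ L_S^N. Then R 1 = 1, i.e., the all-ones vector is fixed by R. -/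
open Matrix

variable {S C : Type*} [Fintype S] [Fintype C] [DecidableEq S] [DecidableEq C]

/-- Degree of a vertex in the ambient graph `G` on vertex set `S ⊕ C`
(`S` = landmark set `V_S`, `C` = the rest of the vertices). -/
noncomputable def deg (W : Matrix (S ⊕ C) (S ⊕ C) ℝ) (x : S ⊕ C) : ℝ := ∑ y, W x y

/-- `W_G[V_S, V_S]`. -/
noncomputable def Wss (W : Matrix (S ⊕ C) (S ⊕ C) ℝ) : Matrix S S ℝ :=
  fun i j => W (Sum.inl i) (Sum.inl j)

/-- The boundary operator `B = W_G[V_G \ V_S, V_S]`. -/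
noncomputable def Bmat (W : Matrix (S ⊕ C) (S ⊕ C) ℝ) : Matrix C S ℝ :=
  fun c s => W (Sum.inr c) (Sum.inl s)

/-- Boundary degree `∂d(c) = Σ_{s ∈ V_S} w(c,s)`. -/
noncomputable def bdeg (W : Matrix (S ⊕ C) (S ⊕ C) ℝ) (c : C) : ℝ := ∑ s, Bmat W c s

/-- `T_S = D_G[V_S, V_S]`. -/
noncomputable def TS (W : Matrix (S ⊕ C) (S ⊕ C) ℝ) : Matrix S S ℝ :=
  diagonal (fun s => deg W (Sum.inl s))

/-- `T_S⁻¹` (inverse of the positive diagonal matrix `T_S`). -/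
noncomputable def TSinv (W : Matrix (S ⊕ C) (S ⊕ C) ℝ) : Matrix S S ℝ :=
  diagonal (fun s => (deg W (Sum.inl s))⁻¹)

/-- `(T_S^δ)⁻¹` (inverse of the boundary degree matrix). -/
noncomputable def Tdinv (W : Matrix (S ⊕ C) (S ⊕ C) ℝ) : Matrix C C ℝ :=
  diagonal (fun c => (bdeg W c)⁻¹)

/-- The Neumann Laplacian `L_S^N = L_G[V_S,V_S] - Bᵀ (T_S^δ)⁻¹ B`,
where `L_G[V_S,V_S] = T_S - W_G[V_S,V_S]`. -/
noncomputable def LN (W : Matrix (S ⊕ C) (S ⊕ C) ℝ) : Matrix S S ℝ :=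
  (TS W - Wss W) - (Bmat W)ᵀ * Tdinv W * Bmat W

/-- `R = I - T_S⁻¹ L_S^N`. -/
noncomputable def Rmat (W : Matrix (S ⊕ C) (S ⊕ C) ℝ) : Matrix S S ℝ :=
  1 - TSinv W * LN W

/- By symmetry of `W`, the degree of a landmark vertex splits into its weight
inside `V_S` plus its weight to the boundary, so `L_G[V_S,V_S] 1 = Bᵀ 1`. On the other hand
`(T_S^δ)⁻¹ B 1 = 1` because `B 1` is the boundary degree. Hence `L_S^N 1 = 0` and `R 1 = 1`. -/

section NeumannLaplacian

variable (W : Matrix (S ⊕ C) (S ⊕ C) ℝ)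

omit [DecidableEq S] [DecidableEq C] in
theorem deg_inl_eq_add (hsym : W.IsSymm) (s : S) :
    deg W (Sum.inl s) = (Wss W *ᵥ fun _ => 1) s + ((Bmat W)ᵀ *ᵥ fun _ => 1) s := by
  simp only [deg, Fintype.sum_sum_type, mulVec, dotProduct, mul_one, Wss, Bmat, transpose_apply,
    ← hsym.apply (Sum.inl s) (Sum.inr _)]

omit [Fintype C] [DecidableEq S] [DecidableEq C] in
theorem Bmat_mulVec_one : (Bmat W *ᵥ fun _ => 1) = bdeg W := by
  funext c
  simp only [mulVec, dotProduct, mul_one, bdeg]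

omit [DecidableEq S] in
theorem Tdinv_mulVec_bdeg (hTd : ∀ c, bdeg W c ≠ 0) : Tdinv W *ᵥ bdeg W = fun _ => 1 := by
  funext c
  simp only [Tdinv, mulVec_diagonal, inv_mul_cancel₀ (hTd c)]

theorem LN_mulVec_one (hsym : W.IsSymm) (hTd : ∀ c, bdeg W c ≠ 0) :
    (LN W *ᵥ fun _ => 1) = 0 := by
  funext s
  simp only [LN, sub_mulVec, ← mulVec_mulVec, Bmat_mulVec_one, Tdinv_mulVec_bdeg W hTd,
    Pi.sub_apply, TS, mulVec_diagonal, mul_one, deg_inl_eq_add W hsym, Pi.zero_apply]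
  ring

end NeumannLaplacian

theorem stmt_0_general (W : Matrix (S ⊕ C) (S ⊕ C) ℝ) (hsym : W.IsSymm)
    (hTd : ∀ c, bdeg W c ≠ 0) :
    Rmat W *ᵥ (fun _ => (1 : ℝ)) = fun _ => 1 := by
  rw [Rmat, sub_mulVec, ← mulVec_mulVec, LN_mulVec_one W hsym hTd, mulVec_zero, one_mulVec,
    sub_zero]

/-- `R 1 = 1`. -/
theorem stmt_0 (W : Matrix (S ⊕ C) (S ⊕ C) ℝ) (hsym : W.IsSymm)
    (hnn : ∀ x y, 0 ≤ W x y)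
    (hTS : ∀ s, deg W (Sum.inl s) ≠ 0) (hTd : ∀ c, bdeg W c ≠ 0) :
    Rmat W *ᵥ (fun _ => (1 : ℝ)) = fun _ => 1 :=
  stmt_0_general W hsym hTd
end

section
/- With the setup of the Neumann Laplacian, the matrix R = I - T_S⁻¹ L_S^N satisfies R = T_S⁻¹ W_G[V_S,V_S] + T_S⁻¹ Bᵀ (T_S^δ)⁻¹ B; in particular, every entry of R is nonnegative. -/
open Matrix

variable {S C : Type*} [Fintype S] [Fintype C] [DecidableEq S] [DecidableEq C]

/-- `R = T_S⁻¹ W_G[V_S,V_S] + T_S⁻¹ Bᵀ (T_S^δ)⁻¹ B`, and the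
entries of `R` are nonnegative. -/
theorem stmt_1 (W : Matrix (S ⊕ C) (S ⊕ C) ℝ) (hsym : W.IsSymm)
    (hnn : ∀ x y, 0 ≤ W x y)
    (hTS : ∀ s, deg W (Sum.inl s) ≠ 0) (hTd : ∀ c, bdeg W c ≠ 0) :
    Rmat W = TSinv W * Wss W + TSinv W * ((Bmat W)ᵀ * Tdinv W * Bmat W) ∧
      ∀ i j, 0 ≤ Rmat W i j := by

  have hTSpos : ∀ s, 0 < deg W (Sum.inl s) := fun s =>
    lt_of_le_of_ne (Finset.sum_nonneg fun y _ => hnn _ y) (Ne.symm (hTS s))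
  have hTdpos : ∀ c, 0 < bdeg W c := fun c =>
    lt_of_le_of_ne (Finset.sum_nonneg fun y _ => hnn _ _) (Ne.symm (hTd c))
  have hinv : TSinv W * TS W = 1 := by
    rw [TSinv, TS, diagonal_mul_diagonal]
    ext i j
    rcases eq_or_ne i j with rfl | h
    · simp [inv_mul_cancel₀ (hTS i)]
    · simp [diagonal_apply_ne _ h, Matrix.one_apply_ne h]
  have hEq : Rmat W = TSinv W * Wss W + TSinv W * ((Bmat W)ᵀ * Tdinv W * Bmat W) := by
    rw [Rmat, LN, mul_sub, mul_sub, hinv]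
    abel
  refine ⟨hEq, fun i j => ?_⟩
  rw [hEq]
  apply add_nonneg
  · rw [TSinv, Matrix.mul_apply]
    refine Finset.sum_nonneg fun k _ => ?_
    rcases eq_or_ne i k with rfl | h
    · simpa [Wss] using mul_nonneg (inv_nonneg.mpr (hTSpos i).le) (hnn _ _)
    · simp [diagonal_apply_ne _ h]
  · rw [TSinv, Matrix.mul_apply]
    refine Finset.sum_nonneg fun k _ => ?_
    rcases eq_or_ne i k with rfl | h
    swap
    · simp [diagonal_apply_ne _ h]
    simp only [diagonal_apply_eq]
    refine mul_nonneg (inv_nonneg.mpr (hTSpos i).le) ?_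
    rw [Matrix.mul_apply]
    refine Finset.sum_nonneg fun c _ => ?_
    rw [Matrix.mul_apply]
    refine mul_nonneg (Finset.sum_nonneg fun d _ => ?_) (hnn _ _)
    rw [Tdinv]
    rcases eq_or_ne c d with rfl | h
    · simp only [diagonal_apply_eq]
      exact mul_nonneg (hnn _ _) (inv_nonneg.mpr (hTdpos c).le)
    · simp [Matrix.diagonal_apply_ne _ (Ne.symm h)]
end

section
/- With the setup of the Neumann Laplacian, the matrix R = I - T_S⁻¹ L_S^N is row-stochastic: all entries are nonnegative and each row sums to 1. -/
open Matrix

variable {S C : Type*} [Fintype S] [Fintype C] [DecidableEq S] [DecidableEq C]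

lemma Rmat_apply (W : Matrix (S ⊕ C) (S ⊕ C) ℝ)
    (hTS : ∀ s, deg W (Sum.inl s) ≠ 0) (i j : S) :
    Rmat W i j = (deg W (Sum.inl i))⁻¹ *
      (W (Sum.inl i) (Sum.inl j) +
        ∑ c, W (Sum.inr c) (Sum.inl i) * (bdeg W c)⁻¹ * W (Sum.inr c) (Sum.inl j)) := by
  have hd := hTS i
  simp only [Rmat, LN, TS, TSinv, Tdinv, Wss, Bmat, Matrix.sub_apply, Matrix.one_apply,
    Matrix.mul_apply, Matrix.diagonal_apply, Matrix.transpose_apply, if_true, mul_ite,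
    ite_mul, mul_zero, zero_mul, Finset.sum_ite_eq, Finset.sum_ite_eq', Finset.mem_univ, if_true]
  by_cases h : i = j
  · subst h
    simp only [if_pos rfl, Finset.mul_sum]
    field_simp
    simp only [↓reduceIte]
    ring
  · simp only [if_neg h, Finset.mul_sum]
    ring

/-- `R` is row-stochastic. -/
theorem stmt_2 (W : Matrix (S ⊕ C) (S ⊕ C) ℝ) (hsym : W.IsSymm)
    (hnn : ∀ x y, 0 ≤ W x y)
    (hTS : ∀ s, deg W (Sum.inl s) ≠ 0) (hTd : ∀ c, bdeg W c ≠ 0) :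
    (∀ i j, 0 ≤ Rmat W i j) ∧ ∀ i, ∑ j, Rmat W i j = 1 := by
  constructor
  · intro i j
    rw [Rmat_apply W hTS]
    have hdi : 0 < deg W (Sum.inl i) := by
      rcases lt_or_eq_of_le (Finset.sum_nonneg (fun y _ => hnn (Sum.inl i) y)) with h | h
      · exact h
      · exact absurd h.symm (hTS i)
    refine mul_nonneg (by positivity) (add_nonneg (hnn _ _) (Finset.sum_nonneg ?_))
    intro c _
    have hbc : 0 < bdeg W c := by
      rcases lt_or_eq_of_le (Finset.sum_nonneg (fun s _ => hnn (Sum.inr c) (Sum.inl s))) with h | h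
      · exact h
      · exact absurd h.symm (hTd c)
    have := hnn (Sum.inr c) (Sum.inl i)
    have := hnn (Sum.inr c) (Sum.inl j)
    positivity
  · intro i
    have key : ∑ j, Rmat W i j = (deg W (Sum.inl i))⁻¹ *
        ((∑ j, W (Sum.inl i) (Sum.inl j)) +
          ∑ c, W (Sum.inr c) (Sum.inl i)) := by
      rw [Finset.sum_congr rfl (fun j _ => Rmat_apply W hTS i j)]
      rw [← Finset.mul_sum, Finset.sum_add_distrib, Finset.sum_comm]
      congr 2
      apply Finset.sum_congr rfl
      intro c _
      simp_rw [mul_assoc, ← Finset.mul_sum]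
      have : ∑ j, W (Sum.inr c) (Sum.inl j) = bdeg W c := by
        simp [bdeg, Bmat]
      rw [this, inv_mul_cancel₀ (hTd c), mul_one]
    rw [key]
    have : (∑ j, W (Sum.inl i) (Sum.inl j)) + ∑ c, W (Sum.inr c) (Sum.inl i)
        = deg W (Sum.inl i) := by
      have hs : ∀ c, W (Sum.inr c) (Sum.inl i) = W (Sum.inl i) (Sum.inr c) := by
        intro c; rw [← hsym.apply]
      simp only [hs]
      rw [deg, Fintype.sum_sum_type]
    rw [this, inv_mul_cancel₀ (hTS i)]
end

section
/- Let v: V_S ∪ δS → ℝ satisfy the discrete Neumann condition on δS (v(y) equals the weighted average (1/∂d(y)) Σ_{z∈V_S} w(y,z)v(z) for all y ∈ δS) and let u = v|_{V_S}. Let λ ∈ ℝ. Then v satisfies the eigenvalue equation (L_{V*} v)(x) = λ d(x) v(x) for all x ∈ V_S if and only if u satisfies the generalized eigenproblem L_S^N u = λ T_S u. -/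
/-!
The Neumann condition says that `v` on `δS` is the extension `(T_S^δ)⁻¹ B u` of `u = v|_{V_S}`.
On the rows of `V_S`, the Laplacian is `L_G[V_S,V_S] u - Bᵀ v|_{δS}` (using `W = Wᵀ`), so
substituting that extension turns `(L_{V*} v)|_{V_S}` into exactly `L_S^N u`, and both
eigen-equations compare this vector with `λ T_S u`.
-/

open Matrix

variable {S C : Type*} [Fintype S] [Fintype C] [DecidableEq S] [DecidableEq C]

theorem LN_mulVec (W : Matrix (S ⊕ C) (S ⊕ C) ℝ) (u : S → ℝ) :
    LN W *ᵥ u = (TS W - Wss W) *ᵥ u - (Bmat W)ᵀ *ᵥ (Tdinv W *ᵥ (Bmat W *ᵥ u)) := by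
  rw [LN, sub_mulVec, ← mulVec_mulVec, ← mulVec_mulVec]

theorem laplacian_mulVec_inl (W : Matrix (S ⊕ C) (S ⊕ C) ℝ) (hsym : W.IsSymm)
    (v : S ⊕ C → ℝ) :
    (fun x => ((diagonal (deg W) - W) *ᵥ v) (Sum.inl x)) =
      (TS W - Wss W) *ᵥ (fun s => v (Sum.inl s)) - (Bmat W)ᵀ *ᵥ (fun c => v (Sum.inr c)) := by
  ext x
  simp only [mulVec, dotProduct, sub_mulVec, Pi.sub_apply, Matrix.sub_apply, TS, Wss, Bmat,
    transpose_apply, diagonal_apply, hsym.apply, Fintype.sum_sum_type, sub_mul, ite_mul, zero_mul,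
    Finset.sum_sub_distrib, Finset.sum_ite_eq, Finset.mem_univ, ↓reduceIte]
  ring

theorem LN_mulVec_of_neumann (W : Matrix (S ⊕ C) (S ⊕ C) ℝ) (hsym : W.IsSymm)
    (v : S ⊕ C → ℝ)
    (hNeu : ∀ c, v (Sum.inr c) =
      (bdeg W c)⁻¹ * ∑ z, W (Sum.inr c) (Sum.inl z) * v (Sum.inl z)) :
    LN W *ᵥ (fun s => v (Sum.inl s)) = fun x => ((diagonal (deg W) - W) *ᵥ v) (Sum.inl x) := by
  have hext : Tdinv W *ᵥ (Bmat W *ᵥ fun s => v (Sum.inl s)) = fun c => v (Sum.inr c) := by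
    ext c
    rw [Tdinv, mulVec_diagonal, hNeu]
    rfl
  rw [LN_mulVec, hext, laplacian_mulVec_inl W hsym]

theorem stmt_4_general (W : Matrix (S ⊕ C) (S ⊕ C) ℝ) (hsym : W.IsSymm)
    (v : S ⊕ C → ℝ) (lam : ℝ)
    (hNeu : ∀ c, v (Sum.inr c) =
      (bdeg W c)⁻¹ * ∑ z, W (Sum.inr c) (Sum.inl z) * v (Sum.inl z)) :
    (∀ x : S, ((diagonal (deg W) - W) *ᵥ v) (Sum.inl x) =
        lam * deg W (Sum.inl x) * v (Sum.inl x)) ↔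
      LN W *ᵥ (fun s => v (Sum.inl s)) =
        lam • (TS W *ᵥ fun s => v (Sum.inl s)) := by
  rw [LN_mulVec_of_neumann W hsym v hNeu, funext_iff]
  simp only [TS, mulVec_diagonal, Pi.smul_apply, smul_eq_mul, mul_assoc]

/-- for `v` satisfying the discrete Neumann condition on `δS`
(modelled by `C`) and `u = v|_{V_S}`, the eigenvalue equation
`(L_{V*} v)(x) = λ d(x) v(x)` for all `x ∈ V_S` holds iff
`L_S^N u = λ T_S u`. -/
theorem stmt_4 (W : Matrix (S ⊕ C) (S ⊕ C) ℝ) (hsym : W.IsSymm)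
    (hnn : ∀ x y, 0 ≤ W x y) (hbd : ∀ c, 0 < bdeg W c)
    (v : S ⊕ C → ℝ) (lam : ℝ)
    (hNeu : ∀ c, v (Sum.inr c) =
      (bdeg W c)⁻¹ * ∑ z, W (Sum.inr c) (Sum.inl z) * v (Sum.inl z)) :
    (∀ x : S, ((diagonal (deg W) - W) *ᵥ v) (Sum.inl x) =
        lam * deg W (Sum.inl x) * v (Sum.inl x)) ↔
      LN W *ᵥ (fun s => v (Sum.inl s)) =
        lam • (TS W *ᵥ fun s => v (Sum.inl s)) :=
  stmt_4_general W hsym v lam hNeu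
end

section
/- For any function f on V_S, the Neumann quadratic form satisfies fᵀ L_S^N f = Σ_{{x,y}⊆V_S} w(x,y)(f(x)-f(y))² + Σ_{y∈δS} ∂d(y) · Var_y(f), where Var_y(f) = (1/∂d(y)) Σ_{x∈V_S} w(y,x) f(x)² − ((1/∂d(y)) Σ_{x∈V_S} w(y,x) f(x))² ≥ 0. In particular L_S^N is positive semidefinite. -/
open Matrix

variable {S C : Type*} [Fintype S] [Fintype C] [DecidableEq S] [DecidableEq C]

/-- the Neumann quadratic form identity
`fᵀ L_S^N f = Σ_{{x,y}⊆V_S} w(x,y)(f x - f y)² + Σ_{y∈δS} ∂d(y)·Var_y(f)`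
(the sum over unordered pairs is written as half the sum over ordered pairs),
`Var_y(f) ≥ 0`, and `L_S^N` is positive semidefinite. -/
theorem stmt_6 (W : Matrix (S ⊕ C) (S ⊕ C) ℝ) (hsym : W.IsSymm)
    (hnn : ∀ x y, 0 ≤ W x y)
    (hd : ∀ s, 0 < deg W (Sum.inl s)) (hbd : ∀ c, 0 < bdeg W c) :
    (∀ f : S → ℝ,
      (f ⬝ᵥ (LN W *ᵥ f) =
        (1 / 2) * (∑ x, ∑ y, Wss W x y * (f x - f y) ^ 2) +
          ∑ c, bdeg W c *
            ((bdeg W c)⁻¹ * (∑ x, Bmat W c x * (f x) ^ 2) -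
              ((bdeg W c)⁻¹ * ∑ x, Bmat W c x * f x) ^ 2)) ∧
      ∀ c, 0 ≤ (bdeg W c)⁻¹ * (∑ x, Bmat W c x * (f x) ^ 2) -
          ((bdeg W c)⁻¹ * ∑ x, Bmat W c x * f x) ^ 2) ∧
    (LN W).PosSemidef := by
  classical
  -- basic symmetry facts
  have hWs : ∀ x y : S, Wss W x y = Wss W y x := fun x y => (hsym.apply _ _)
  have hWssT : (Wss W)ᵀ = Wss W := by
    ext i j; exact hsym.apply _ _
  -- Cauchy-Schwarz for the variance terms
  have hCS : ∀ (f : S → ℝ) (c : C),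
      (∑ x, Bmat W c x * f x) ^ 2 ≤ bdeg W c * ∑ x, Bmat W c x * f x ^ 2 := by
    intro f c
    have hBx : ∀ x, 0 ≤ Bmat W c x := fun x => hnn _ _
    have h := Finset.sum_mul_sq_le_sq_mul_sq Finset.univ
      (fun x => Real.sqrt (Bmat W c x)) (fun x => Real.sqrt (Bmat W c x) * f x)
    have e1 : ∀ x : S, Real.sqrt (Bmat W c x) * (Real.sqrt (Bmat W c x) * f x)
        = Bmat W c x * f x := fun x => by
      rw [← mul_assoc, Real.mul_self_sqrt (hBx x)]
    have e2 : ∀ x : S, Real.sqrt (Bmat W c x) ^ 2 = Bmat W c x := fun x =>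
      Real.sq_sqrt (hBx x)
    have e3 : ∀ x : S, (Real.sqrt (Bmat W c x) * f x) ^ 2 = Bmat W c x * f x ^ 2 := fun x => by
      rw [mul_pow, e2]
    simp_rw [e1, e2, e3] at h
    simpa [bdeg] using h
  -- variance nonnegativity
  have hvar : ∀ (f : S → ℝ) (c : C),
      0 ≤ (bdeg W c)⁻¹ * (∑ x, Bmat W c x * (f x) ^ 2) -
          ((bdeg W c)⁻¹ * ∑ x, Bmat W c x * f x) ^ 2 := by
    intro f c
    have hb := hbd c
    have hbne : bdeg W c ≠ 0 := hb.ne'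
    have h3 : (bdeg W c)⁻¹ ^ 2 * (∑ x, Bmat W c x * f x) ^ 2
        ≤ (bdeg W c)⁻¹ ^ 2 * (bdeg W c * ∑ x, Bmat W c x * f x ^ 2) :=
      mul_le_mul_of_nonneg_left (hCS f c) (sq_nonneg _)
    have h4 : (bdeg W c)⁻¹ ^ 2 * (bdeg W c * ∑ x, Bmat W c x * f x ^ 2)
        = (bdeg W c)⁻¹ * ∑ x, Bmat W c x * f x ^ 2 := by
      field_simp
    rw [h4] at h3
    rw [mul_pow] at *
    linarith
  -- the quadratic form identity
  have key : ∀ f : S → ℝ,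
      f ⬝ᵥ (LN W *ᵥ f) =
        (1 / 2) * (∑ x, ∑ y, Wss W x y * (f x - f y) ^ 2) +
          ∑ c, bdeg W c *
            ((bdeg W c)⁻¹ * (∑ x, Bmat W c x * (f x) ^ 2) -
              ((bdeg W c)⁻¹ * ∑ x, Bmat W c x * f x) ^ 2) := by
    intro f
    -- diagonal part
    have hTS : f ⬝ᵥ (TS W *ᵥ f) = ∑ x, deg W (Sum.inl x) * f x ^ 2 := by
      simp only [dotProduct, TS, mulVec_diagonal]
      exact Finset.sum_congr rfl fun x _ => by ring
    -- Wss part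
    have hWssf : f ⬝ᵥ (Wss W *ᵥ f) = ∑ x, ∑ y, Wss W x y * f x * f y := by
      simp only [dotProduct, mulVec, Finset.mul_sum]
      exact Finset.sum_congr rfl fun x _ => Finset.sum_congr rfl fun y _ => by ring
    -- boundary part
    have hBpart : f ⬝ᵥ (((Bmat W)ᵀ * Tdinv W * Bmat W) *ᵥ f)
        = ∑ c, (bdeg W c)⁻¹ * (∑ x, Bmat W c x * f x) ^ 2 := by
      have hdiag : ∀ g : C → ℝ, g ⬝ᵥ (Tdinv W *ᵥ g) = ∑ c, (bdeg W c)⁻¹ * (g c) ^ 2 := by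
        intro g
        simp only [dotProduct, Tdinv, Matrix.mulVec_diagonal]
        exact Finset.sum_congr rfl fun c _ => by ring
      rw [Matrix.mul_assoc, ← Matrix.mulVec_mulVec, Matrix.dotProduct_mulVec,
        Matrix.vecMul_transpose, ← Matrix.mulVec_mulVec, hdiag]
      exact Finset.sum_congr rfl fun c _ => by simp [Matrix.mulVec, dotProduct]
    -- degree decomposition
    have hdeg : ∀ x : S, deg W (Sum.inl x) = (∑ y, Wss W x y) + ∑ c, Bmat W c x := by
      intro x
      rw [deg, Fintype.sum_sum_type]
      congr 1
      exact Finset.sum_congr rfl fun c _ => (hsym.apply _ _)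
    have e1 : ∑ x, deg W (Sum.inl x) * f x ^ 2
        = (∑ x, ∑ y, Wss W x y * f x ^ 2) + ∑ x, ∑ c, Bmat W c x * f x ^ 2 := by
      rw [← Finset.sum_add_distrib]
      refine Finset.sum_congr rfl fun x _ => ?_
      rw [hdeg x, add_mul, Finset.sum_mul, Finset.sum_mul]
    have e2 : ∑ x, ∑ y, Wss W x y * f y ^ 2 = ∑ x, ∑ y, Wss W x y * f x ^ 2 := by
      rw [Finset.sum_comm]
      exact Finset.sum_congr rfl fun x _ => Finset.sum_congr rfl fun y _ => by
        rw [hWs]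
    have hsq : ∑ x, ∑ y, Wss W x y * (f x - f y) ^ 2
        = 2 * (∑ x, ∑ y, Wss W x y * f x ^ 2)
          - 2 * (∑ x, ∑ y, Wss W x y * f x * f y) := by
      have e0 : ∀ x y : S, Wss W x y * (f x - f y) ^ 2
          = (Wss W x y * f x ^ 2 + Wss W x y * f y ^ 2) - 2 * (Wss W x y * f x * f y) :=
        fun x y => by ring
      simp_rw [e0, Finset.sum_sub_distrib, Finset.sum_add_distrib, ← Finset.mul_sum]
      rw [e2]
      ring
    have hswap : ∑ x, ∑ c, Bmat W c x * f x ^ 2 = ∑ c, ∑ x, Bmat W c x * f x ^ 2 :=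
      Finset.sum_comm
    have hvarsum : ∑ c, bdeg W c *
            ((bdeg W c)⁻¹ * (∑ x, Bmat W c x * (f x) ^ 2) -
              ((bdeg W c)⁻¹ * ∑ x, Bmat W c x * f x) ^ 2)
        = (∑ c, ∑ x, Bmat W c x * f x ^ 2)
          - ∑ c, (bdeg W c)⁻¹ * (∑ x, Bmat W c x * f x) ^ 2 := by
      rw [← Finset.sum_sub_distrib]
      refine Finset.sum_congr rfl fun c _ => ?_
      have hbne : bdeg W c ≠ 0 := (hbd c).ne'
      field_simp
    have hsplit : f ⬝ᵥ (LN W *ᵥ f)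
        = f ⬝ᵥ (TS W *ᵥ f) - f ⬝ᵥ (Wss W *ᵥ f)
          - f ⬝ᵥ (((Bmat W)ᵀ * Tdinv W * Bmat W) *ᵥ f) := by
      simp [LN, Matrix.sub_mulVec, dotProduct_sub]
    rw [hsplit, hTS, hWssf, hBpart, e1, hvarsum, hswap, hsq]
    ring
  -- symmetry of LN
  have hLNT : (LN W)ᵀ = LN W := by
    have hTd : (Tdinv W)ᵀ = Tdinv W := Matrix.diagonal_transpose _
    have hTSt : (TS W)ᵀ = TS W := Matrix.diagonal_transpose _
    simp [LN, Matrix.transpose_sub, Matrix.transpose_mul, hTd, hTSt, hWssT,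
      Matrix.mul_assoc]
  have hherm : (LN W).IsHermitian := by
    rw [Matrix.IsHermitian, Matrix.conjTranspose]
    ext i j
    simpa using congrFun (congrFun hLNT i) j
  refine ⟨fun f => ⟨key f, hvar f⟩, posSemidef_iff_dotProduct_mulVec.mpr ⟨hherm, fun f => ?_⟩⟩
  have h0 : (0:ℝ) ≤ f ⬝ᵥ (LN W *ᵥ f) := by
    rw [key f]
    have t1 : (0:ℝ) ≤ ∑ x, ∑ y, Wss W x y * (f x - f y) ^ 2 :=
      Finset.sum_nonneg fun x _ => Finset.sum_nonneg fun y _ =>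
        mul_nonneg (hnn _ _) (sq_nonneg _)
    have t2 : (0:ℝ) ≤ ∑ c, bdeg W c *
            ((bdeg W c)⁻¹ * (∑ x, Bmat W c x * (f x) ^ 2) -
              ((bdeg W c)⁻¹ * ∑ x, Bmat W c x * f x) ^ 2) :=
      Finset.sum_nonneg fun c _ => mul_nonneg (hbd c).le (hvar f c)
    linarith
  simpa using h0
end
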